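/- arXiv:2503.01365 — 3 statements merged into one kernel-verified Lean document; each statement's English description precedes it below -/
import Mathlib

section
/- Let A, B be abelian groups equipped with cones A⁺, B⁺ (additive submonoids), and let u ∈ A⁺ be an order unit for (A,A⁺) and v ∈ B⁺ be an order unit for (B,B⁺). Then u ⊗ v is an order unit for A ⊗_ℤ B with respect to the tensor cone P, i.e., for every t ∈ A ⊗_ℤ B there exists n ∈ ℕ with n•(u ⊗ v) − t ∈ P. -/
/-!
Elements dominated by some multiple of `u ⊗ v` form an additive submonoid, so it suffices to
bound pure tensors. Since `u` and `v` are order units lying in their cones, every `a` and `b`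
is a difference of positive elements; expanding `a ⊗ b` bilinearly leaves positive pure
tensors, bounded via `k l • (u ⊗ v) - a ⊗ b = (k • u - a) ⊗ (l • v) + a ⊗ (l • v - b)`, and
negatives of them, bounded by `0 • (u ⊗ v)`.
-/

open scoped TensorProduct
open TensorProduct

namespace AddSubmonoid

variable {M : Type*} [AddCommGroup M]

def boundedBy (P : AddSubmonoid M) (w : M) : AddSubmonoid M where
  carrier := {x | ∃ n : ℕ, n • w - x ∈ P}
  zero_mem' := ⟨0, by simp⟩
  add_mem' := by
    rintro x y ⟨n, hn⟩ ⟨m, hm⟩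
    refine ⟨n + m, ?_⟩
    have : (n + m) • w - (x + y) = (n • w - x) + (m • w - y) := by
      rw [add_smul]; abel
    simpa only [this] using P.add_mem hn hm

theorem mem_boundedBy {P : AddSubmonoid M} {w x : M} :
    x ∈ P.boundedBy w ↔ ∃ n : ℕ, n • w - x ∈ P :=
  Iff.rfl

theorem neg_mem_boundedBy {P : AddSubmonoid M} (w : M) {x : M} (hx : x ∈ P) :
    -x ∈ P.boundedBy w :=
  ⟨0, by simpa using hx⟩

theorem exists_eq_sub_of_orderUnit {P : AddSubmonoid M} {u : M} (hu : u ∈ P)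
    (hu_unit : ∀ x : M, ∃ n : ℕ, n • u - x ∈ P) (x : M) :
    ∃ a ∈ P, ∃ b ∈ P, x = a - b := by
  obtain ⟨n, hn⟩ := hu_unit x
  exact ⟨n • u, P.nsmul_mem hu n, n • u - x, hn, (sub_sub_cancel _ _).symm⟩

end AddSubmonoid

open AddSubmonoid

section TensorCone

variable {A B : Type*} [AddCommGroup A] [AddCommGroup B] {Ap : AddSubmonoid A}
  {Bp : AddSubmonoid B} {u : A} {v : B}

variable (Ap Bp) in
def tensorCone : AddSubmonoid (A ⊗[ℤ] B) :=
  closure {s | ∃ a ∈ Ap, ∃ b ∈ Bp, s = a ⊗ₜ[ℤ] b}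

theorem tmul_mem_tensorCone {a : A} {b : B} (ha : a ∈ Ap) (hb : b ∈ Bp) :
    a ⊗ₜ[ℤ] b ∈ tensorCone Ap Bp :=
  subset_closure ⟨a, ha, b, hb, rfl⟩

theorem tmul_mem_boundedBy_tensorCone_of_mem (hv : v ∈ Bp)
    (hu_unit : ∀ x : A, ∃ n : ℕ, n • u - x ∈ Ap) (hv_unit : ∀ y : B, ∃ n : ℕ, n • v - y ∈ Bp)
    {a : A} (ha : a ∈ Ap) (b : B) : a ⊗ₜ[ℤ] b ∈ (tensorCone Ap Bp).boundedBy (u ⊗ₜ[ℤ] v) := by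
  obtain ⟨k, hk⟩ := hu_unit a
  obtain ⟨l, hl⟩ := hv_unit b
  refine ⟨k * l, ?_⟩
  have key : (k * l) • (u ⊗ₜ[ℤ] v) - a ⊗ₜ[ℤ] b
      = (k • u - a) ⊗ₜ[ℤ] (l • v) + a ⊗ₜ[ℤ] (l • v - b) := by
    rw [mul_smul, ← tmul_smul, smul_tmul', sub_tmul, tmul_sub]
    abel
  rw [key]
  exact add_mem (tmul_mem_tensorCone hk (Bp.nsmul_mem hv l)) (tmul_mem_tensorCone ha hl)

theorem tmul_mem_boundedBy_tensorCone (hu : u ∈ Ap) (hv : v ∈ Bp)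
    (hu_unit : ∀ x : A, ∃ n : ℕ, n • u - x ∈ Ap) (hv_unit : ∀ y : B, ∃ n : ℕ, n • v - y ∈ Bp)
    (a : A) (b : B) : a ⊗ₜ[ℤ] b ∈ (tensorCone Ap Bp).boundedBy (u ⊗ₜ[ℤ] v) := by
  obtain ⟨a₁, ha₁, a₂, ha₂, rfl⟩ := exists_eq_sub_of_orderUnit hu hu_unit a
  obtain ⟨b₁, hb₁, b₂, hb₂, rfl⟩ := exists_eq_sub_of_orderUnit hv hv_unit b
  have expand : (a₁ - a₂) ⊗ₜ[ℤ] (b₁ - b₂)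
      = a₁ ⊗ₜ b₁ + a₂ ⊗ₜ b₂ + -(a₁ ⊗ₜ b₂) + -(a₂ ⊗ₜ b₁) := by
    simp only [sub_tmul, tmul_sub]
    abel
  have bounded {a : A} (ha : a ∈ Ap) (b : B) :=
    tmul_mem_boundedBy_tensorCone_of_mem hv hu_unit hv_unit ha b
  rw [expand]
  exact add_mem (add_mem (add_mem (bounded ha₁ b₁) (bounded ha₂ b₂))
    (neg_mem_boundedBy _ (tmul_mem_tensorCone ha₁ hb₂)))
    (neg_mem_boundedBy _ (tmul_mem_tensorCone ha₂ hb₁))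

theorem boundedBy_tensorCone_eq_top (hu : u ∈ Ap) (hv : v ∈ Bp)
    (hu_unit : ∀ x : A, ∃ n : ℕ, n • u - x ∈ Ap) (hv_unit : ∀ y : B, ∃ n : ℕ, n • v - y ∈ Bp) :
    (tensorCone Ap Bp).boundedBy (u ⊗ₜ[ℤ] v) = ⊤ :=
  eq_top_iff.2 fun t _ => t.induction_on (zero_mem _)
    (tmul_mem_boundedBy_tensorCone hu hv hu_unit hv_unit) fun _ _ => add_mem

end TensorCone

/-- If `u ∈ Ap` is an order unit for `(A, Ap)` and `v ∈ Bp` is an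
order unit for `(B, Bp)`, then `u ⊗ₜ v` is an order unit for `A ⊗[ℤ] B` with respect
to the tensor cone (the additive submonoid generated by pure tensors of positive
elements). -/
theorem stmt_1 {A B : Type*} [AddCommGroup A] [AddCommGroup B]
    (Ap : AddSubmonoid A) (Bp : AddSubmonoid B)
    (u : A) (v : B) (hu : u ∈ Ap) (hv : v ∈ Bp)
    (hu_unit : ∀ x : A, ∃ n : ℕ, n • u - x ∈ Ap)
    (hv_unit : ∀ y : B, ∃ n : ℕ, n • v - y ∈ Bp) :
    ∀ t : A ⊗[ℤ] B, ∃ n : ℕ,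
      n • (u ⊗ₜ[ℤ] v) - t ∈ AddSubmonoid.closure
        {s : A ⊗[ℤ] B | ∃ a ∈ Ap, ∃ b ∈ Bp, s = a ⊗ₜ[ℤ] b} := fun t =>
  mem_boundedBy.1 <| (boundedBy_tensorCone_eq_top hu hv hu_unit hv_unit).symm ▸ mem_top t
end

section
/- Let G = {(x,y,z) ∈ ℤ³ : x + y + z is even}, a subgroup of ℤ³, with cone G⁺ = {(0,y,z) ∈ G : y and z are even}. Let A = ℚ × G with the lexicographic cone A⁺ = {(q,g) : 0 < q} ∪ {(0,g) : g ∈ G⁺}. Then (A,A⁺) satisfies interpolation: whenever a₁, a₂, b₁, b₂ ∈ A satisfy b_j − a_i ∈ A⁺ for all i,j ∈ {1,2}, there exists c ∈ A with c − a_i ∈ A⁺ and b_j − c ∈ A⁺ for all i,j ∈ {1,2}. -/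
/-- The subgroup `G = {(x,y,z) ∈ ℤ³ : x + y + z even}`. -/
def G : AddSubgroup (ℤ × ℤ × ℤ) where
  carrier := {g | Even (g.1 + g.2.1 + g.2.2)}
  zero_mem' := by simp
  add_mem' := by
    intro a b ha hb
    simp only [Set.mem_setOf_eq, Int.even_iff, Prod.fst_add, Prod.snd_add] at *
    omega
  neg_mem' := by
    intro a ha
    simp only [Set.mem_setOf_eq, Int.even_iff, Prod.fst_neg, Prod.snd_neg] at *
    omega

/-- The lexicographic cone on `A = ℚ × G`: first coordinate strictly positive, or first
coordinate zero and second coordinate in `G⁺ = {(0,y,z) ∈ G : y, z even}`. -/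
def Acone : AddSubmonoid (ℚ × G) where
  carrier := {x | 0 < x.1 ∨ (x.1 = 0 ∧ (x.2 : ℤ × ℤ × ℤ).1 = 0 ∧
      Even (x.2 : ℤ × ℤ × ℤ).2.1 ∧ Even (x.2 : ℤ × ℤ × ℤ).2.2)}
  zero_mem' := by
    right
    simp
  add_mem' := by
    intro a b ha hb
    simp only [Set.mem_setOf_eq, Prod.fst_add, Prod.snd_add, AddSubgroup.coe_add,
      Prod.fst_add, Prod.snd_add] at *
    rcases ha with h1 | ⟨h1, h2, h3, h4⟩ <;> rcases hb with g1 | ⟨g1, g2, g3, g4⟩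
    · exact Or.inl (add_pos h1 g1)
    · exact Or.inl (by simpa [g1] using h1)
    · exact Or.inl (by simpa [h1] using g1)
    · exact Or.inr ⟨by simp [h1, g1], by simp [h2, g2], h3.add g3, h4.add g4⟩

/-!
If the first coordinates leave a gap, `max aᵢ.1 < min bⱼ.1`, any `c` with first coordinate
strictly in between works, by density of `ℚ`. Otherwise `max aᵢ.1 = min bⱼ.1`, and the largest
`aₖ` is the interpolant: it has the same first coordinate as some `bⱼ`, and since `G⁺` is a
subgroup, `aₖ ≤ bⱼ` at equal first coordinates forces `bⱼ ≤ aₖ`, whence `aᵢ ≤ bⱼ ≤ aₖ`.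
-/

lemma fst_le_fst_of_sub_mem_Acone {x y : ℚ × G} (h : y - x ∈ Acone) : x.1 ≤ y.1 := by
  rcases h with h | ⟨h, -⟩ <;> rw [Prod.fst_sub] at h <;> linarith

lemma sub_mem_Acone_of_fst_lt {x y : ℚ × G} (h : x.1 < y.1) : y - x ∈ Acone :=
  Or.inl (by rw [Prod.fst_sub]; linarith)

lemma neg_mem_Acone_of_fst_eq_zero {x : ℚ × G} (hx : x ∈ Acone) (h : x.1 = 0) : -x ∈ Acone := by
  rcases hx with hx | ⟨-, h₁, h₂, h₃⟩
  · exact absurd h hx.ne'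
  · exact Or.inr ⟨by simp [h], by simp [h₁], h₂.neg, h₃.neg⟩

lemma sub_mem_Acone_symm_of_fst_eq {x y : ℚ × G} (h : y - x ∈ Acone)
    (hxy : x.1 = y.1) : x - y ∈ Acone := by
  rw [← neg_sub]
  exact neg_mem_Acone_of_fst_eq_zero h (by rw [Prod.fst_sub, hxy, sub_self])

lemma sub_mem_Acone_of_common_upper_bound {a a' b : ℚ × G} (ha : b - a ∈ Acone)
    (ha' : b - a' ∈ Acone) (hb : b.1 ≤ a.1) : a - a' ∈ Acone := by
  have hba : a - b ∈ Acone := sub_mem_Acone_symm_of_fst_eq ha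
    (le_antisymm (fst_le_fst_of_sub_mem_Acone ha) hb)
  simpa only [sub_add_sub_cancel'] using add_mem ha' hba

lemma sub_mem_Acone_of_max_fst {a a' b₁ b₂ : ℚ × G} (h₁ : b₁ - a ∈ Acone)
    (h₂ : b₂ - a ∈ Acone) (h₁' : b₁ - a' ∈ Acone) (h₂' : b₂ - a' ∈ Acone) (ha : a'.1 ≤ a.1)
    (hb : min b₁.1 b₂.1 ≤ a.1) : a - a' ∈ Acone := by
  rcases ha.lt_or_eq with ha | ha
  · exact sub_mem_Acone_of_fst_lt ha
  rcases min_le_iff.mp hb with hb | hb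
  · exact sub_mem_Acone_of_common_upper_bound h₁ h₁' hb
  · exact sub_mem_Acone_of_common_upper_bound h₂ h₂' hb

/-- `(A, A⁺)` satisfies interpolation: whenever
`b_j − a_i ∈ A⁺` for all `i, j ∈ {1,2}`, there is `c` with `c − a_i ∈ A⁺` and
`b_j − c ∈ A⁺` for all `i, j`. -/
theorem stmt_6 :
    ∀ a₁ a₂ b₁ b₂ : ℚ × G,
      b₁ - a₁ ∈ Acone → b₁ - a₂ ∈ Acone → b₂ - a₁ ∈ Acone → b₂ - a₂ ∈ Acone →
      ∃ c : ℚ × G,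
        c - a₁ ∈ Acone ∧ c - a₂ ∈ Acone ∧ b₁ - c ∈ Acone ∧ b₂ - c ∈ Acone := by
  intro a₁ a₂ b₁ b₂ h₁₁ h₁₂ h₂₁ h₂₂
  by_cases hgap : max a₁.1 a₂.1 < min b₁.1 b₂.1
  · obtain ⟨q, hq, hq'⟩ := exists_between hgap
    rw [max_lt_iff] at hq
    rw [lt_min_iff] at hq'
    exact ⟨(q, 0), sub_mem_Acone_of_fst_lt hq.1, sub_mem_Acone_of_fst_lt hq.2,
      sub_mem_Acone_of_fst_lt hq'.1, sub_mem_Acone_of_fst_lt hq'.2⟩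
  rw [not_lt] at hgap
  have hzero {a : ℚ × G} : a - a ∈ Acone := by simp
  rcases le_total a₂.1 a₁.1 with h | h
  · refine ⟨a₁, hzero, sub_mem_Acone_of_max_fst h₁₁ h₂₁ h₁₂ h₂₂ h ?_, h₁₁, h₂₁⟩
    exact hgap.trans (max_eq_left h).le
  · refine ⟨a₂, sub_mem_Acone_of_max_fst h₁₂ h₂₂ h₁₁ h₂₁ h ?_, hzero, h₁₂, h₂₂⟩
    exact hgap.trans (max_eq_right h).le
end

section
/- Let B = ℚ × ℤ with cone B⁺ = {(q,n) : 0 < q} ∪ {(0,n) : n is even}. Then (B,B⁺) satisfies interpolation (whenever a₁, a₂, b₁, b₂ ∈ B satisfy b_j − a_i ∈ B⁺ for all i,j ∈ {1,2}, there exists c ∈ B with c − a_i ∈ B⁺ and b_j − c ∈ B⁺ for all i,j ∈ {1,2}), and v_B = (1,0) ∈ B⁺ is an order unit for (B,B⁺): for every x ∈ B there exists n ∈ ℕ with n•v_B − x ∈ B⁺. -/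
/-! `B` is the lexicographic product `ℚ ×_lex (ℤ, 2ℤ)`, and the argument works for any
`K ×_lex (G, H)` with `K` densely ordered, whose cone consists of the `(k, g)` with `k > 0`, or
`k = 0` and `g ∈ H`. Cone elements with first coordinate `0` are invertible in the cone, so two
lower bounds of `b`, one of them on the level of `b`, are comparable. Interpolation therefore
takes the higher lower bound when it is on the level of an upper bound, and otherwise a point
`(q, 0)` strictly between the levels. Any `v` with `v.1 > 0` is an order unit once `K` is
Archimedean. -/

/-- The cone on `B = ℚ × ℤ`: first coordinate strictly positive, or first coordinate
zero and second coordinate even. -/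
def Bcone : AddSubmonoid (ℚ × ℤ) where
  carrier := {x | 0 < x.1 ∨ (x.1 = 0 ∧ Even x.2)}
  zero_mem' := by
    right
    simp
  add_mem' := by
    intro a b ha hb
    simp only [Set.mem_setOf_eq, Prod.fst_add, Prod.snd_add] at *
    rcases ha with h1 | ⟨h1, h2⟩ <;> rcases hb with g1 | ⟨g1, g2⟩
    · exact Or.inl (add_pos h1 g1)
    · exact Or.inl (by simpa [g1] using h1)
    · exact Or.inl (by simpa [h1] using g1)
    · exact Or.inr ⟨by simp [h1, g1], h2.add g2⟩

section

variable {B : Type*} [AddCommGroup B]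

def HasInterpolation (C : AddSubmonoid B) : Prop :=
  ∀ a₁ a₂ b₁ b₂ : B, b₁ - a₁ ∈ C → b₁ - a₂ ∈ C → b₂ - a₁ ∈ C → b₂ - a₂ ∈ C →
    ∃ c : B, c - a₁ ∈ C ∧ c - a₂ ∈ C ∧ b₁ - c ∈ C ∧ b₂ - c ∈ C

def IsOrderUnit (C : AddSubmonoid B) (v : B) : Prop :=
  ∀ x : B, ∃ n : ℕ, n • v - x ∈ C

end

section LexCone

variable {K G : Type*} [AddCommGroup K] [LinearOrder K] [IsOrderedAddMonoid K]
  [AddCommGroup G] (H : AddSubgroup G)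

def lexCone : AddSubmonoid (K × G) where
  carrier := {x | 0 < x.1 ∨ (x.1 = 0 ∧ x.2 ∈ H)}
  zero_mem' := Or.inr ⟨rfl, H.zero_mem⟩
  add_mem' := by
    rintro x y (hx | ⟨hx, hx'⟩) (hy | ⟨hy, hy'⟩)
    · exact Or.inl (add_pos hx hy)
    · exact Or.inl (by simpa [hy] using hx)
    · exact Or.inl (by simpa [hx] using hy)
    · exact Or.inr ⟨by simp [hx, hy], H.add_mem hx' hy'⟩

variable {H}

theorem mem_lexCone_of_fst_pos {x : K × G} (hx : 0 < x.1) : x ∈ lexCone H := Or.inl hx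

theorem fst_nonneg_of_mem_lexCone {x : K × G} (hx : x ∈ lexCone H) : 0 ≤ x.1 := by
  rcases hx with hx | ⟨hx, -⟩
  exacts [hx.le, hx.ge]

theorem neg_mem_lexCone_of_fst_eq_zero {x : K × G} (hx : x ∈ lexCone H) (h : x.1 = 0) :
    -x ∈ lexCone H := by
  rcases hx with hx | ⟨-, hx⟩
  · exact absurd h hx.ne'
  · exact Or.inr ⟨by simp [h], H.neg_mem hx⟩

theorem sub_mem_lexCone_of_fst_eq {a₁ a₂ b : K × G} (h₁ : b - a₁ ∈ lexCone H)
    (h₂ : b - a₂ ∈ lexCone H) (h : b.1 = a₂.1) : a₂ - a₁ ∈ lexCone H := by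
  have h₂' : -(b - a₂) ∈ lexCone H := neg_mem_lexCone_of_fst_eq_zero h₂ (by simp [h])
  rw [show a₂ - a₁ = (b - a₁) + -(b - a₂) by abel]
  exact add_mem h₁ h₂'

theorem hasInterpolation_lexCone [DenselyOrdered K] : HasInterpolation (lexCone (K := K) H) := by
  intro a₁ a₂ b₁ b₂ h₁₁ h₁₂ h₂₁ h₂₂
  wlog ha : a₁.1 ≤ a₂.1 generalizing a₁ a₂
  · obtain ⟨c, hc₂, hc₁, hb₁, hb₂⟩ := this a₂ a₁ h₁₂ h₁₁ h₂₂ h₂₁ (le_of_not_ge ha)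
    exact ⟨c, hc₁, hc₂, hb₁, hb₂⟩
  by_cases hb₁ : b₁.1 = a₂.1
  · exact ⟨a₂, sub_mem_lexCone_of_fst_eq h₁₁ h₁₂ hb₁, by simp [zero_mem], h₁₂, h₂₂⟩
  by_cases hb₂ : b₂.1 = a₂.1
  · exact ⟨a₂, sub_mem_lexCone_of_fst_eq h₂₁ h₂₂ hb₂, by simp [zero_mem], h₁₂, h₂₂⟩
  have lt₁ : a₂.1 < b₁.1 :=
    (sub_nonneg.mp (fst_nonneg_of_mem_lexCone h₁₂)).lt_of_ne' hb₁
  have lt₂ : a₂.1 < b₂.1 :=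
    (sub_nonneg.mp (fst_nonneg_of_mem_lexCone h₂₂)).lt_of_ne' hb₂
  obtain ⟨q, hq, hqb⟩ := exists_between (lt_min lt₁ lt₂)
  refine ⟨(q, 0), ?_, ?_, ?_, ?_⟩ <;> apply mem_lexCone_of_fst_pos <;>
    simp only [Prod.fst_sub, sub_pos]
  · exact ha.trans_lt hq
  · exact hq
  · exact hqb.trans_le (min_le_left _ _)
  · exact hqb.trans_le (min_le_right _ _)

theorem isOrderUnit_lexCone [Archimedean K] {v : K × G} (hv : 0 < v.1) :
    IsOrderUnit (lexCone H) v := by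
  intro x
  obtain ⟨n, hn⟩ := exists_lt_nsmul hv x.1
  exact ⟨n, mem_lexCone_of_fst_pos (by simpa using hn)⟩

end LexCone

theorem Bcone_eq_lexCone : Bcone = lexCone (AddSubgroup.even ℤ) := rfl

/-- `(B, B⁺)` satisfies interpolation, and `v_B = (1, 0)` belongs to
`B⁺` and is an order unit for `(B, B⁺)`. -/
theorem stmt_7 :
    (∀ a₁ a₂ b₁ b₂ : ℚ × ℤ,
      b₁ - a₁ ∈ Bcone → b₁ - a₂ ∈ Bcone → b₂ - a₁ ∈ Bcone → b₂ - a₂ ∈ Bcone →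
      ∃ c : ℚ × ℤ,
        c - a₁ ∈ Bcone ∧ c - a₂ ∈ Bcone ∧ b₁ - c ∈ Bcone ∧ b₂ - c ∈ Bcone) ∧
    ((1, 0) : ℚ × ℤ) ∈ Bcone ∧
      ∀ x : ℚ × ℤ, ∃ n : ℕ, n • ((1, 0) : ℚ × ℤ) - x ∈ Bcone := by
  rw [Bcone_eq_lexCone]
  exact ⟨hasInterpolation_lexCone, mem_lexCone_of_fst_pos one_pos,
    isOrderUnit_lexCone one_pos⟩
end
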